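/- For real numbers a and b, the integral over the real line of φ(au)·φ(bu) with respect to the standard Gaussian measure equals (1/(2π))·arccos(−ab/(√(1+a²)·√(1+b²))), where φ(u) = (1/√(2π))∫_{−∞}^u exp(−v²/2) dv is the Gaussian error (cumulative distribution) function. -/

import Mathlib

open Real MeasureTheory Set

/-- Standard Gaussian density. -/
noncomputable def gauss (u : ℝ) : ℝ := (Real.sqrt (2 * Real.pi))⁻¹ * Real.exp (-u ^ 2 / 2)

/-- Standard normal CDF (error function in the paper's notation). -/
noncomputable def Phi (u : ℝ) : ℝ := ∫ v in Set.Iio u, gauss v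

/-!
Differentiate the left side in `a` under the integral sign. The derivative
`∫ u gauss(au) Phi(bu) gauss(u) du = (2π)⁻¹ ∫ u exp(-(1 + a²)u²/2) Phi(bu) du` is turned by
Gaussian integration by parts (Stein's identity
`∫ x exp(-cx²) f(x) dx = (2c)⁻¹ ∫ exp(-cx²) f'(x) dx`) into a Gaussian integral, equal to
`b / (2π (1 + a²) √(1 + a² + b²))`; this is also the `a`-derivative of the right side.
At `a = 0` both sides are `1/4`: `Phi 0 = 1/2`, and `∫ Phi(bu) gauss(u) du = 1/2` by the
symmetry `Phi x + Phi (-x) = 1`.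
-/

open Filter ProbabilityTheory

theorem integral_mul_exp_neg_mul_sq_mul_eq {b : ℝ} (hb : 0 < b) {f f' : ℝ → ℝ}
    (hf : ∀ x, HasDerivAt f (f' x) x) {C C' : ℝ} (hfC : ∀ x, ‖f x‖ ≤ C)
    (hf'C : ∀ x, ‖f' x‖ ≤ C') :
    ∫ x, x * exp (-b * x ^ 2) * f x = (2 * b)⁻¹ * ∫ x, exp (-b * x ^ 2) * f' x := by
  set v : ℝ → ℝ := fun x => -(2 * b)⁻¹ * exp (-b * x ^ 2)
  have hv : ∀ x, HasDerivAt v (x * exp (-b * x ^ 2)) x := fun x => by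
    have := (((hasDerivAt_pow 2 x).const_mul (-b)).exp).const_mul (-(2 * b)⁻¹)
    exact this.congr_deriv (by field_simp; push_cast; ring)
  have hf_meas : AEStronglyMeasurable f := (continuous_iff_continuousAt.2 fun x =>
    (hf x).continuousAt).aestronglyMeasurable
  have hf'_meas : AEStronglyMeasurable f' := by
    rw [show f' = deriv f from funext fun x => (hf x).deriv.symm]
    exact (measurable_deriv f).aestronglyMeasurable
  have hv_int : Integrable v := (integrable_exp_neg_mul_sq hb).const_mul _
  have parts := integral_mul_deriv_eq_deriv_mul_of_integrable (fun x _ => hf x) (fun x _ => hv x)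
    ((integrable_mul_exp_neg_mul_sq hb).bdd_mul hf_meas (.of_forall hfC))
    (hv_int.bdd_mul hf'_meas (.of_forall hf'C)) (hv_int.bdd_mul hf_meas (.of_forall hfC))
  simp only [v] at parts
  calc ∫ x, x * exp (-b * x ^ 2) * f x = ∫ x, f x * (x * exp (-b * x ^ 2)) := by
        simp only [mul_comm _ (f _)]
    _ = _ := by
        rw [parts, ← integral_neg, ← integral_const_mul]
        congr 1 with x
        ring

theorem gauss_eq_gaussianPDFReal : gauss = gaussianPDFReal 0 1 := by
  ext u
  simp [gauss, gaussianPDFReal]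

theorem gauss_eq_mul_exp (u : ℝ) : gauss u = (√(2 * π))⁻¹ * exp (-(1 / 2) * u ^ 2) := by
  rw [gauss]; ring_nf

theorem gauss_nonneg (u : ℝ) : 0 ≤ gauss u := by
  rw [gauss_eq_gaussianPDFReal]; exact gaussianPDFReal_nonneg _ _ _

theorem norm_gauss_le (u : ℝ) : ‖gauss u‖ ≤ (√(2 * π))⁻¹ := by
  rw [Real.norm_of_nonneg (gauss_nonneg u), gauss]
  exact mul_le_of_le_one_right (by positivity) (exp_le_one_iff.2 (by nlinarith [sq_nonneg u]))

theorem continuous_gauss : Continuous gauss := by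
  unfold gauss; fun_prop

theorem gauss_neg (u : ℝ) : gauss (-u) = gauss u := by simp [gauss]

theorem integrable_gauss : Integrable gauss := by
  rw [gauss_eq_gaussianPDFReal]; exact integrable_gaussianPDFReal _ _

theorem integral_gauss : ∫ u, gauss u = 1 := by
  rw [gauss_eq_gaussianPDFReal]; exact integral_gaussianPDFReal_eq_one _ one_ne_zero

theorem integrable_id_mul_gauss : Integrable fun u => u * gauss u := by
  simp_rw [gauss_eq_mul_exp, mul_left_comm _ (√(2 * π))⁻¹]
  exact (integrable_mul_exp_neg_mul_sq (by norm_num)).const_mul _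

theorem gauss_mul_mul_exp (b c u : ℝ) :
    gauss (b * u) * exp (-c * u ^ 2) = (√(2 * π))⁻¹ * exp (-(c + b ^ 2 / 2) * u ^ 2) := by
  rw [gauss, mul_assoc, ← exp_add]; ring_nf

theorem Phi_nonneg (u : ℝ) : 0 ≤ Phi u :=
  setIntegral_nonneg measurableSet_Iio fun v _ => gauss_nonneg v

theorem Phi_le_one (u : ℝ) : Phi u ≤ 1 :=
  integral_gauss ▸ setIntegral_le_integral integrable_gauss (.of_forall gauss_nonneg)

theorem norm_Phi_le_one (u : ℝ) : ‖Phi u‖ ≤ 1 := by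
  rw [Real.norm_of_nonneg (Phi_nonneg u)]; exact Phi_le_one u

theorem Phi_add_Phi_neg (u : ℝ) : Phi u + Phi (-u) = 1 := by
  have h : Phi (-u) = ∫ v in Ioi u, gauss v := by
    rw [Phi, ← integral_Iic_eq_integral_Iio, ← integral_comp_neg_Ioi]
    simp [gauss_neg]
  rw [Phi, ← integral_Iic_eq_integral_Iio, h, ← integral_gauss,
    ← integral_add_compl measurableSet_Iic integrable_gauss, compl_Iic]

theorem Phi_zero : Phi 0 = 1 / 2 := by
  have h := Phi_add_Phi_neg 0
  rw [neg_zero] at h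
  linarith

theorem hasDerivAt_Phi (u : ℝ) : HasDerivAt Phi (gauss u) u := by
  have hPhi : ∀ x, Phi x = Phi 0 + ∫ t in (0 : ℝ)..x, gauss t := fun x => by
    rw [Phi, Phi, ← integral_Iic_eq_integral_Iio, ← integral_Iic_eq_integral_Iio,
      ← intervalIntegral.integral_Iic_sub_Iic integrable_gauss.integrableOn
        integrable_gauss.integrableOn]
    ring
  rw [funext hPhi]
  exact (intervalIntegral.integral_hasDerivAt_right integrable_gauss.intervalIntegrable
    (continuous_gauss.stronglyMeasurableAtFilter _ _) continuous_gauss.continuousAt).const_add _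

theorem continuous_Phi : Continuous Phi :=
  continuous_iff_continuousAt.2 fun u => (hasDerivAt_Phi u).continuousAt

theorem integrable_Phi_mul_mul {g : ℝ → ℝ} (hg : Integrable g) (b : ℝ) :
    Integrable fun u => Phi (b * u) * g u :=
  hg.bdd_mul (continuous_Phi.comp (continuous_const_mul b)).aestronglyMeasurable
    (.of_forall fun _ => norm_Phi_le_one _)

theorem integral_Phi_mul_gauss (b : ℝ) : ∫ u, Phi (b * u) * gauss u = 1 / 2 := by
  have hsymm : ∫ u, Phi (-b * u) * gauss u = ∫ u, Phi (b * u) * gauss u := by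
    rw [← integral_neg_eq_self]
    simp [gauss_neg]
  have hsum : (∫ u, Phi (b * u) * gauss u) + ∫ u, Phi (-b * u) * gauss u = 1 := by
    rw [← integral_add (integrable_Phi_mul_mul integrable_gauss b)
      (integrable_Phi_mul_mul integrable_gauss (-b)), ← integral_gauss]
    congr 1 with u
    rw [← add_mul, neg_mul, Phi_add_Phi_neg, one_mul]
  linarith

theorem hasDerivAt_integral_Phi_mul {g : ℝ → ℝ} (hg : Integrable g)
    (hg' : Integrable fun u => u * g u) (a : ℝ) :
    HasDerivAt (fun a => ∫ u, Phi (a * u) * g u) (∫ u, u * gauss (a * u) * g u) a := by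
  have hF := integrable_Phi_mul_mul hg
  refine (hasDerivAt_integral_of_dominated_loc_of_deriv_le
    (F' := fun x u => u * gauss (x * u) * g u) (bound := fun u => (√(2 * π))⁻¹ * ‖u * g u‖)
    univ_mem (.of_forall fun a => (hF a).aestronglyMeasurable) (hF a) ?_ ?_
    (hg'.norm.const_mul _) ?_).2
  · exact (continuous_id.mul (continuous_gauss.comp (continuous_const_mul a))).aestronglyMeasurable
      |>.mul hg.aestronglyMeasurable
  · refine .of_forall fun u x _ => ?_
    rw [mul_comm u, mul_assoc, norm_mul]
    exact mul_le_mul_of_nonneg_right (norm_gauss_le _) (norm_nonneg _)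
  · refine .of_forall fun u x _ => ?_
    have := ((hasDerivAt_Phi (x * u)).comp x ((hasDerivAt_id x).mul_const u)).mul_const (g u)
    exact this.congr_deriv (by ring)

theorem integral_id_mul_gauss_mul_Phi_mul_gauss (a b : ℝ) :
    ∫ u, u * gauss (a * u) * (Phi (b * u) * gauss u) =
      1 / (2 * π) * (b / ((1 + a ^ 2) * √(1 + a ^ 2 + b ^ 2))) := by
  obtain ⟨c, hc⟩ : ∃ c, c = (1 + a ^ 2) / 2 := ⟨_, rfl⟩
  have hsqrt : (√(2 * π))⁻¹ * (√(2 * π))⁻¹ = (2 * π)⁻¹ := by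
    rw [← mul_inv, mul_self_sqrt (by positivity)]
  have hPhi : ∀ u, HasDerivAt (fun u => Phi (b * u)) (b * gauss (b * u)) u := fun u =>
    ((hasDerivAt_Phi (b * u)).comp u ((hasDerivAt_id u).const_mul b)).congr_deriv
      (by simp [mul_comm])
  have hStein := integral_mul_exp_neg_mul_sq_mul_eq (by rw [hc]; positivity : 0 < c) hPhi
    (fun u => norm_Phi_le_one (b * u)) (fun u => (norm_mul_le _ _).trans
      (mul_le_mul_of_nonneg_left (norm_gauss_le (b * u)) (norm_nonneg b)))
  calc ∫ u, u * gauss (a * u) * (Phi (b * u) * gauss u)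
      = (2 * π)⁻¹ * ∫ u, u * exp (-c * u ^ 2) * Phi (b * u) := by
        rw [← integral_const_mul]
        congr 1 with u
        have h := gauss_mul_mul_exp a (1 / 2) u
        rw [show 1 / 2 + a ^ 2 / 2 = c by rw [hc]; ring] at h
        rw [gauss_eq_mul_exp u, ← hsqrt]
        linear_combination (u * Phi (b * u) * (√(2 * π))⁻¹) * h
    _ = (2 * π)⁻¹ * (2 * c)⁻¹ * (b * (√(2 * π))⁻¹) * ∫ u, exp (-(c + b ^ 2 / 2) * u ^ 2) := by
        have h : ∫ u, exp (-c * u ^ 2) * (b * gauss (b * u)) =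
            b * (√(2 * π))⁻¹ * ∫ u, exp (-(c + b ^ 2 / 2) * u ^ 2) := by
          rw [← integral_const_mul]
          congr 1 with u
          rw [mul_assoc, ← gauss_mul_mul_exp]
          ring
        rw [hStein, h]
        ring
    _ = 1 / (2 * π) * (b / ((1 + a ^ 2) * √(1 + a ^ 2 + b ^ 2))) := by
        have hpos : 0 < 1 + a ^ 2 + b ^ 2 := by positivity
        subst hc
        rw [integral_gaussian,
          show π / ((1 + a ^ 2) / 2 + b ^ 2 / 2) = 2 * π / (1 + a ^ 2 + b ^ 2) by field_simp,
          sqrt_div (by positivity)]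
        field_simp

theorem hasDerivAt_div_sqrt_one_add_sq (x : ℝ) :
    HasDerivAt (fun x => x / √(1 + x ^ 2)) ((1 + x ^ 2) * √(1 + x ^ 2))⁻¹ x := by
  have hpos : 0 < 1 + x ^ 2 := by positivity
  have hsqrt := ((hasDerivAt_pow 2 x).const_add 1).sqrt hpos.ne'
  refine ((hasDerivAt_id' x).div hsqrt (sqrt_pos.2 hpos).ne').congr_deriv ?_
  have := sq_sqrt hpos.le
  field_simp
  linear_combination 2 * x ^ 2 * this

theorem hasDerivAt_arccos_neg_mul_div_sqrt (a b : ℝ) :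
    HasDerivAt (fun a => arccos (-(a * b) / (√(1 + a ^ 2) * √(1 + b ^ 2))))
      (b / ((1 + a ^ 2) * √(1 + a ^ 2 + b ^ 2))) a := by
  have ha : 0 < 1 + a ^ 2 := by positivity
  have hb : 0 < 1 + b ^ 2 := by positivity
  set q := fun a => -(a * b) / (√(1 + a ^ 2) * √(1 + b ^ 2))
  have hq : q = fun x => -b / √(1 + b ^ 2) * (x / √(1 + x ^ 2)) := by
    ext x; simp only [q]; ring
  have hq_sq : 1 - q a ^ 2 = (1 + a ^ 2 + b ^ 2) / ((1 + a ^ 2) * (1 + b ^ 2)) := by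
    simp only [q]
    rw [div_pow, mul_pow, sq_sqrt ha.le, sq_sqrt hb.le]
    field_simp
    ring
  have hq_lt : q a ^ 2 < 1 := by
    have : 0 < 1 - q a ^ 2 := by rw [hq_sq]; positivity
    linarith
  have hne : q a ≠ -1 ∧ q a ≠ 1 := by
    constructor <;> rintro h <;> rw [h] at hq_lt <;> norm_num at hq_lt
  refine ((hasDerivAt_arccos hne.1 hne.2).comp a
    (hq ▸ (hasDerivAt_div_sqrt_one_add_sq a).const_mul _)).congr_deriv ?_
  rw [hq_sq, sqrt_div (by positivity), sqrt_mul ha.le]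
  field_simp

theorem integral_Phi_mul_Phi (a b : ℝ) :
    ∫ u : ℝ, Phi (a * u) * Phi (b * u) * gauss u =
      (1 / (2 * Real.pi)) *
        Real.arccos (-(a * b) / (Real.sqrt (1 + a ^ 2) * Real.sqrt (1 + b ^ 2))) := by
  have hg' : Integrable fun u => u * (Phi (b * u) * gauss u) := by
    simpa only [mul_left_comm _ (Phi _)] using integrable_Phi_mul_mul integrable_id_mul_gauss b
  have hLHS := fun x => integral_id_mul_gauss_mul_Phi_mul_gauss x b ▸
    hasDerivAt_integral_Phi_mul (integrable_Phi_mul_mul integrable_gauss b) hg' x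
  have hRHS := fun x => (hasDerivAt_arccos_neg_mul_div_sqrt x b).const_mul (1 / (2 * π))
  have h0 : ∫ u, Phi (0 * u) * (Phi (b * u) * gauss u) =
      1 / (2 * π) * arccos (-(0 * b) / (√(1 + 0 ^ 2) * √(1 + b ^ 2))) := by
    simp only [zero_mul, Phi_zero, integral_const_mul, integral_Phi_mul_gauss, neg_zero, zero_div,
      arccos_zero]
    field_simp
  simp_rw [mul_assoc (Phi _)]
  exact congrFun (eq_of_fderiv_eq (fun x => (hLHS x).differentiableAt)
    (fun x => (hRHS x).differentiableAt)
    (fun x => by rw [(hLHS x).hasFDerivAt.fderiv, (hRHS x).hasFDerivAt.fderiv]) 0 h0) a
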